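/- arXiv:1608.04763 — 3 statements merged into one kernel-verified Lean document; each statement's English description precedes it below -/
import Mathlib

section
/- Fix real matrices A (n×n) and B (n×m). For a symmetric positive semidefinite n×n matrix Q and a symmetric positive definite m×m matrix R, let P_T(Q,R) be defined by the Riccati iteration P_0(Q,R) = 0 and P_{k+1}(Q,R) = AᵀP_k(Q,R)A − AᵀP_k(Q,R)B(BᵀP_k(Q,R)B+R)⁻¹BᵀP_k(Q,R)A + Q. If Q_1 ⪯ Q_2 (both symmetric positive semidefinite) and R_1 ⪯ R_2 (both symmetric positive definite), then P_T(Q_1,R_1) ⪯ P_T(Q_2,R_2) for every T ∈ ℕ. -/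
open Matrix

/-- The finite-horizon Riccati iteration with `P 0 = 0` and
`P (k+1) = AᵀP_kA − AᵀP_kB(BᵀP_kB+R)⁻¹BᵀP_kA + Q`. -/
noncomputable def riccati {n m : ℕ} (A : Matrix (Fin n) (Fin n) ℝ)
    (B : Matrix (Fin n) (Fin m) ℝ) (Q : Matrix (Fin n) (Fin n) ℝ)
    (R : Matrix (Fin m) (Fin m) ℝ) : ℕ → Matrix (Fin n) (Fin n) ℝ
  | 0 => 0
  | k + 1 =>
      Aᵀ * riccati A B Q R k * A -
        Aᵀ * riccati A B Q R k * B * (Bᵀ * riccati A B Q R k * B + R)⁻¹ *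
          Bᵀ * riccati A B Q R k * A + Q

/-- The Loewner order on real square matrices: `X ⪯ Y` iff `Y − X` is positive semidefinite. -/
def loewnerLE {n : ℕ} (X Y : Matrix (Fin n) (Fin n) ℝ) : Prop := (Y - X).PosSemidef

set_option maxHeartbeats 1600000

lemma ct_eq_t {α β : Type*} [Fintype α] [Fintype β] (M : Matrix α β ℝ) : Mᴴ = Mᵀ := by
  ext i j; simp [conjTranspose]

lemma sq_expand {m n : ℕ} (S T : Matrix (Fin m) (Fin m) ℝ) (G : Matrix (Fin m) (Fin n) ℝ)
    (K : Matrix (Fin m) (Fin n) ℝ) (hT : Tᵀ = T) (hST : S * T = 1) (hTS : T * S = 1) :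
    (K - T * G)ᵀ * S * (K - T * G)
      = Kᵀ * S * K - Kᵀ * G - Gᵀ * K + Gᵀ * (T * G) := by
  have hc1 : ∀ (X : Matrix (Fin m) (Fin n) ℝ), S * (T * X) = X := by
    intro X; rw [← Matrix.mul_assoc, hST, Matrix.one_mul]
  have hc2 : ∀ (X : Matrix (Fin m) (Fin n) ℝ), T * (S * X) = X := by
    intro X; rw [← Matrix.mul_assoc, hTS, Matrix.one_mul]
  simp only [transpose_sub, transpose_mul, hT, Matrix.sub_mul, Matrix.mul_sub,
    Matrix.mul_assoc, hc1, hc2]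
  abel

/-- Completion-of-squares identity for the Riccati map. -/
lemma riccati_key {n m : ℕ} (A : Matrix (Fin n) (Fin n) ℝ) (B : Matrix (Fin n) (Fin m) ℝ)
    (P : Matrix (Fin n) (Fin n) ℝ) (R : Matrix (Fin m) (Fin m) ℝ)
    (hP : Pᵀ = P) (hS : (Bᵀ * P * B + R).PosDef) (K : Matrix (Fin m) (Fin n) ℝ) :
    (A - B * K)ᵀ * P * (A - B * K) + Kᵀ * R * K
      = (Aᵀ * P * A - Aᵀ * P * B * (Bᵀ * P * B + R)⁻¹ * Bᵀ * P * A)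
        + (K - (Bᵀ * P * B + R)⁻¹ * (Bᵀ * P * A))ᵀ * (Bᵀ * P * B + R) *
            (K - (Bᵀ * P * B + R)⁻¹ * (Bᵀ * P * A)) := by
  have hdet : IsUnit (Bᵀ * P * B + R).det := (Matrix.isUnit_iff_isUnit_det _).mp hS.isUnit
  have hSt : (Bᵀ * P * B + R)ᵀ = Bᵀ * P * B + R := by
    rw [← ct_eq_t]; exact hS.isHermitian.eq
  have hInvT : ((Bᵀ * P * B + R)⁻¹)ᵀ = (Bᵀ * P * B + R)⁻¹ := by
    rw [Matrix.transpose_nonsing_inv, hSt]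
  rw [sq_expand _ _ _ _ hInvT (Matrix.mul_nonsing_inv _ hdet) (Matrix.nonsing_inv_mul _ hdet)]
  simp only [transpose_sub, transpose_mul, transpose_transpose, hP,
    Matrix.sub_mul, Matrix.mul_sub, Matrix.add_mul, Matrix.mul_add, Matrix.mul_assoc]
  abel

lemma tmul_psd {n m : ℕ} {P : Matrix (Fin n) (Fin n) ℝ} (hP : P.PosSemidef)
    (M : Matrix (Fin n) (Fin m) ℝ) : (Mᵀ * P * M).PosSemidef := by
  have := hP.conjTranspose_mul_mul_same M
  rwa [ct_eq_t] at this

lemma S_posDef {n m : ℕ} (B : Matrix (Fin n) (Fin m) ℝ)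
    {P : Matrix (Fin n) (Fin n) ℝ} {R : Matrix (Fin m) (Fin m) ℝ}
    (hP : P.PosSemidef) (hR : R.PosDef) : (Bᵀ * P * B + R).PosDef :=
  Matrix.PosDef.posSemidef_add (tmul_psd hP B) hR

/-- The Riccati step at the optimal gain. -/
lemma step_eq {n m : ℕ} (A : Matrix (Fin n) (Fin n) ℝ) (B : Matrix (Fin n) (Fin m) ℝ)
    (P : Matrix (Fin n) (Fin n) ℝ) (R : Matrix (Fin m) (Fin m) ℝ)
    (hP : P.PosSemidef) (hR : R.PosDef) :
    Aᵀ * P * A - Aᵀ * P * B * (Bᵀ * P * B + R)⁻¹ * Bᵀ * P * A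
      = (A - B * ((Bᵀ * P * B + R)⁻¹ * (Bᵀ * P * A)))ᵀ * P *
          (A - B * ((Bᵀ * P * B + R)⁻¹ * (Bᵀ * P * A)))
        + ((Bᵀ * P * B + R)⁻¹ * (Bᵀ * P * A))ᵀ * R *
            ((Bᵀ * P * B + R)⁻¹ * (Bᵀ * P * A)) := by
  have hPt : Pᵀ = P := by rw [← ct_eq_t]; exact hP.isHermitian.eq
  have h := riccati_key A B P R hPt (S_posDef B hP hR) ((Bᵀ * P * B + R)⁻¹ * (Bᵀ * P * A))
  simp only [sub_self, Matrix.zero_mul, Matrix.mul_zero, transpose_zero, add_zero] at h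
  exact h.symm

/-- Positive semidefiniteness of the Riccati step. -/
lemma step_psd {n m : ℕ} (A : Matrix (Fin n) (Fin n) ℝ) (B : Matrix (Fin n) (Fin m) ℝ)
    (P Q : Matrix (Fin n) (Fin n) ℝ) (R : Matrix (Fin m) (Fin m) ℝ)
    (hP : P.PosSemidef) (hQ : Q.PosSemidef) (hR : R.PosDef) :
    (Aᵀ * P * A - Aᵀ * P * B * (Bᵀ * P * B + R)⁻¹ * Bᵀ * P * A + Q).PosSemidef := by
  rw [step_eq A B P R hP hR]
  exact ((tmul_psd hP _).add (tmul_psd hR.posSemidef _)).add hQ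

/-- Monotonicity of a single Riccati step. -/
lemma step_mono {n m : ℕ} (A : Matrix (Fin n) (Fin n) ℝ) (B : Matrix (Fin n) (Fin m) ℝ)
    (P₁ P₂ Q₁ Q₂ : Matrix (Fin n) (Fin n) ℝ) (R₁ R₂ : Matrix (Fin m) (Fin m) ℝ)
    (hP₁ : P₁.PosSemidef) (hP₂ : P₂.PosSemidef) (hR₁ : R₁.PosDef) (hR₂ : R₂.PosDef)
    (hP : (P₂ - P₁).PosSemidef) (hQ : (Q₂ - Q₁).PosSemidef) (hR : (R₂ - R₁).PosSemidef) :
    ((Aᵀ * P₂ * A - Aᵀ * P₂ * B * (Bᵀ * P₂ * B + R₂)⁻¹ * Bᵀ * P₂ * A + Q₂)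
      - (Aᵀ * P₁ * A - Aᵀ * P₁ * B * (Bᵀ * P₁ * B + R₁)⁻¹ * Bᵀ * P₁ * A + Q₁)).PosSemidef := by
  set K := (Bᵀ * P₂ * B + R₂)⁻¹ * (Bᵀ * P₂ * A) with hK
  have hP₁t : P₁ᵀ = P₁ := by rw [← ct_eq_t]; exact hP₁.isHermitian.eq
  have hS₁ : (Bᵀ * P₁ * B + R₁).PosDef := S_posDef B hP₁ hR₁
  have e2 := step_eq A B P₂ R₂ hP₂ hR₂
  have e1 := riccati_key A B P₁ R₁ hP₁t hS₁ K
  set M := K - (Bᵀ * P₁ * B + R₁)⁻¹ * (Bᵀ * P₁ * A) with hM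
  have e1' : Aᵀ * P₁ * A - Aᵀ * P₁ * B * (Bᵀ * P₁ * B + R₁)⁻¹ * Bᵀ * P₁ * A
      = ((A - B * K)ᵀ * P₁ * (A - B * K) + Kᵀ * R₁ * K) - Mᵀ * (Bᵀ * P₁ * B + R₁) * M := by
    rw [e1]; abel
  have key : (Aᵀ * P₂ * A - Aᵀ * P₂ * B * (Bᵀ * P₂ * B + R₂)⁻¹ * Bᵀ * P₂ * A + Q₂)
      - (Aᵀ * P₁ * A - Aᵀ * P₁ * B * (Bᵀ * P₁ * B + R₁)⁻¹ * Bᵀ * P₁ * A + Q₁)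
      = ((A - B * K)ᵀ * (P₂ - P₁) * (A - B * K) + Kᵀ * (R₂ - R₁) * K + (Q₂ - Q₁))
        + Mᵀ * (Bᵀ * P₁ * B + R₁) * M := by
    rw [e2, e1']
    simp only [Matrix.sub_mul, Matrix.mul_sub]
    abel
  rw [key]
  exact (((tmul_psd hP _).add (tmul_psd hR _)).add hQ).add (tmul_psd hS₁.posSemidef _)

/-- Monotonicity of the Riccati recursion in the weight matrices (Loewner order). -/
theorem riccati_monotone_in_weights {n m : ℕ}
    (A : Matrix (Fin n) (Fin n) ℝ) (B : Matrix (Fin n) (Fin m) ℝ)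
    (Q₁ Q₂ : Matrix (Fin n) (Fin n) ℝ) (R₁ R₂ : Matrix (Fin m) (Fin m) ℝ)
    (hQ₁ : Q₁.PosSemidef) (hQ₂ : Q₂.PosSemidef)
    (hR₁ : R₁.PosDef) (hR₂ : R₂.PosDef)
    (hQ : loewnerLE Q₁ Q₂) (hR : loewnerLE R₁ R₂) :
    ∀ T : ℕ, loewnerLE (riccati A B Q₁ R₁ T) (riccati A B Q₂ R₂ T) := by
  suffices H : ∀ T : ℕ, (riccati A B Q₁ R₁ T).PosSemidef ∧ (riccati A B Q₂ R₂ T).PosSemidef ∧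
      loewnerLE (riccati A B Q₁ R₁ T) (riccati A B Q₂ R₂ T) from fun T => (H T).2.2
  intro T
  induction T with
  | zero =>
      refine ⟨Matrix.PosSemidef.zero, Matrix.PosSemidef.zero, ?_⟩
      show ((0 : Matrix (Fin n) (Fin n) ℝ) - 0).PosSemidef
      simpa using (Matrix.PosSemidef.zero : (0 : Matrix (Fin n) (Fin n) ℝ).PosSemidef)
  | succ k ih =>
      obtain ⟨h1, h2, h12⟩ := ih
      refine ⟨step_psd A B _ _ _ h1 hQ₁ hR₁, step_psd A B _ _ _ h2 hQ₂ hR₂, ?_⟩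
      exact step_mono A B _ _ _ _ _ _ h1 h2 hR₁ hR₂ h12 hQ hR
end

section
/- Fix real matrices A (n×n) and B (n×m), a symmetric positive definite n×n matrix Q, and a symmetric positive definite m×m matrix R, and let P_T be defined by the Riccati iteration P_0 = 0 and P_{k+1} = AᵀP_kA − AᵀP_kB(BᵀP_kB+R)⁻¹BᵀP_kA + Q. Suppose (A,B) is stabilizable, i.e., there exists a real m×n matrix K such that every complex eigenvalue μ of A − BK satisfies |μ| < 1. Then there exists a sequence of real numbers (α_T)_{T≥2} with α_T > 1 for all T, lim_{T→∞} α_T = 1, and P_{T+1} ⪯ α_{T+1} P_T for all T ≥ 1. -/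
open Matrix

/-!
The Riccati map is the pointwise minimum, over gains `K`, of the closed-loop maps
`P ↦ (A - BK)ᵀ P (A - BK) + Kᵀ R K + Q`, each of which is monotone in the Loewner order; hence
the iterates `P_T` increase. For a stabilizing gain, Gelfand's formula makes the powers of
`A - BK` decay geometrically, so `P_T` is bounded by the convergent series
`∑ₖ ((A - BK)ᵀ)ᵏ (Q + KᵀRK) (A - BK)ᵏ`. Thus `tr P_T` converges and the positive semidefinite
increments `D_T = P_{T+1} - P_T` have `tr D_T → 0`. As `D_T ⪯ (tr D_T) • 1` and
`c • 1 ⪯ Q ⪯ P_T` for some `c > 0`, we get `P_{T+1} ⪯ (1 + tr D_T / c) • P_T`.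
-/

open Filter Topology
open scoped NNReal ENNReal MatrixOrder

theorem spectrum.eventually_norm_pow_le_of_spectralRadius_lt {A : Type*} [NormedRing A]
    [NormedAlgebra ℂ A] [CompleteSpace A] {a : A} {r : ℝ≥0} (h : spectralRadius ℂ a < r) :
    ∀ᶠ k in atTop, ‖a ^ k‖ ≤ r ^ k := by
  filter_upwards [(pow_nnnorm_pow_one_div_tendsto_nhds_spectralRadius a).eventually_lt_const h,
    eventually_gt_atTop 0] with k hk hk0
  have hk' : (‖a ^ k‖₊ : ℝ≥0∞) ≤ (r : ℝ≥0∞) ^ k := by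
    simpa [← ENNReal.rpow_natCast, ← ENNReal.rpow_mul, hk0.ne'] using
      ENNReal.rpow_le_rpow hk.le (Nat.cast_nonneg k)
  exact_mod_cast hk'

namespace Matrix

variable {ι : Type*} [Fintype ι]

theorem transpose_mul_mul_le_transpose_mul_mul {κ : Type*} [Fintype κ] {X Y : Matrix ι ι ℝ}
    (h : X ≤ Y) (M : Matrix ι κ ℝ) : Mᵀ * X * M ≤ Mᵀ * Y * M := by
  rw [le_iff, ← Matrix.sub_mul, ← Matrix.mul_sub]
  simpa using (le_iff.mp h).conjTranspose_mul_mul_same M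

theorem trace_mono {X Y : Matrix ι ι ℝ} (h : X ≤ Y) : X.trace ≤ Y.trace := by
  simpa [trace_sub] using (le_iff.mp h).trace_nonneg

theorem tendsto_trace_succ_sub {P : ℕ → Matrix ι ι ℝ} (hP : Monotone P)
    (hb : BddAbove (Set.range fun T => (P T).trace)) :
    Tendsto (fun T => (P (T + 1) - P T).trace) atTop (𝓝 0) := by
  have hlim := tendsto_atTop_ciSup (fun _ _ h => trace_mono (hP h)) hb
  simpa [trace_sub] using (hlim.comp (tendsto_add_atTop_nat 1)).sub hlim

variable [DecidableEq ι]

theorem le_trace_smul_one {S : Matrix ι ι ℝ} (hS : 0 ≤ S) : S ≤ S.trace • (1 : Matrix ι ι ℝ) := by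
  have hH := hS.posSemidef.isHermitian
  rw [← Algebra.algebraMap_eq_smul_one]
  refine le_algebraMap_of_spectrum_le (fun x hx => ?_) hH.isSelfAdjoint
  obtain ⟨i, rfl⟩ := hH.spectrum_real_eq_range_eigenvalues ▸ hx
  rw [hH.trace_eq_sum_eigenvalues]
  exact Finset.single_le_sum (fun j _ => hS.posSemidef.eigenvalues_nonneg j) (Finset.mem_univ i)

theorem PosDef.exists_pos_smul_one_le {S : Matrix ι ι ℝ} (hS : S.PosDef) :
    ∃ c : ℝ, 0 < c ∧ c • (1 : Matrix ι ι ℝ) ≤ S := by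
  cases subsingleton_or_nontrivial (Matrix ι ι ℝ)
  · exact ⟨1, one_pos, (Subsingleton.elim _ _).le⟩
  simp_rw [← Algebra.algebraMap_eq_smul_one]
  exact (CFC.exists_pos_algebraMap_le_iff hS.isHermitian.isSelfAdjoint).2
    fun _ hx => hS.isStrictlyPositive.spectrum_pos hx

theorem trace_transpose_mul_mul_le {κ : Type*} [Fintype κ] {S : Matrix ι ι ℝ} (hS : 0 ≤ S)
    (M : Matrix ι κ ℝ) : (Mᵀ * S * M).trace ≤ S.trace * (Mᵀ * M).trace := by
  simpa [trace_smul] using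
    trace_mono (transpose_mul_mul_le_transpose_mul_mul (le_trace_smul_one hS) M)

theorem add_le_smul_of_smul_one_le {D P : Matrix ι ι ℝ} {c : ℝ} (hc : 0 < c) (hD : 0 ≤ D)
    (hP : c • (1 : Matrix ι ι ℝ) ≤ P) : P + D ≤ (1 + D.trace / c) • P := by
  have hDP : D ≤ (D.trace / c) • P := calc
    D ≤ D.trace • (1 : Matrix ι ι ℝ) := le_trace_smul_one hD
    _ = (D.trace / c) • c • (1 : Matrix ι ι ℝ) := by rw [smul_smul, div_mul_cancel₀ _ hc.ne']
    _ ≤ (D.trace / c) • P :=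
      smul_le_smul_of_nonneg_left hP (div_nonneg hD.posSemidef.trace_nonneg hc.le)
  simpa [add_smul] using add_le_add_left hDP P

theorem exists_le_smul_of_monotone_of_bddAbove_trace {P : ℕ → Matrix ι ι ℝ} (hP : Monotone P)
    (hb : BddAbove (Set.range fun T => (P T).trace)) {c : ℝ} (hc : 0 < c)
    (hcP : ∀ T, 1 ≤ T → c • (1 : Matrix ι ι ℝ) ≤ P T) :
    ∃ α : ℕ → ℝ, (∀ T, 2 ≤ T → 1 < α T) ∧ Tendsto α atTop (𝓝 1) ∧
      ∀ T, 1 ≤ T → P (T + 1) ≤ α (T + 1) • P T := by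
  set δ := fun T => (P (T + 1) - P T).trace
  have hδ : ∀ T, 0 ≤ δ T := fun T => (le_iff.mp (hP T.le_succ)).trace_nonneg
  -- the `1 / T` term keeps `α T > 1` strict when the increments vanish
  refine ⟨fun T => 1 + δ (T - 1) / c + 1 / T, fun T hT => ?_, ?_, fun T hT => ?_⟩
  · have hT0 : (0 : ℝ) < 1 / T := one_div_pos.2 (by exact_mod_cast (by omega : 0 < T))
    linarith [div_nonneg (hδ (T - 1)) hc.le]
  · have hδ0 := (tendsto_trace_succ_sub hP hb).comp (tendsto_sub_atTop_nat 1)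
    simpa [δ] using ((hδ0.div_const c).const_add 1).add tendsto_one_div_atTop_nhds_zero_nat
  · have hPT : 0 ≤ P T := (smul_nonneg hc.le zero_le_one).trans (hcP T hT)
    calc P (T + 1) = P T + (P (T + 1) - P T) := by abel
      _ ≤ (1 + δ T / c) • P T :=
        add_le_smul_of_smul_one_le hc (sub_nonneg.2 (hP T.le_succ)) (hcP T hT)
      _ ≤ (1 + δ (T + 1 - 1) / c + 1 / ↑(T + 1)) • P T :=
        smul_le_smul_of_nonneg_right (by simp; positivity) hPT

section Frobenius

attribute [local instance] frobeniusNormedAddCommGroup frobeniusNormedRing frobeniusNormedAlgebra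

omit [DecidableEq ι] in
theorem trace_transpose_mul_self_eq_frobenius_norm_sq {κ : Type*} [Fintype κ]
    (M : Matrix ι κ ℝ) : (Mᵀ * M).trace = ‖M‖ ^ 2 := by
  rw [frobenius_norm_def, ← Real.sqrt_eq_rpow, Real.sq_sqrt (by positivity)]
  simp [trace, mul_apply, Finset.sum_comm (γ := ι), sq]

theorem summable_frobenius_norm_pow_sq {Φ : Matrix ι ι ℝ}
    (h : ∀ μ ∈ spectrum ℂ (Φ.map (fun r : ℝ => (r : ℂ))), ‖μ‖ < 1) :
    Summable fun k => ‖Φ ^ k‖ ^ 2 := by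
  set Φc := Φ.map (fun r : ℝ => (r : ℂ))
  have hρ : spectralRadius ℂ Φc < 1 := by
    cases subsingleton_or_nontrivial (Matrix ι ι ℂ)
    · simp [spectralRadius, spectrum.of_subsingleton]
    · exact_mod_cast spectrum.spectralRadius_lt_of_forall_lt Φc (r := 1) fun z hz =>
        by exact_mod_cast h z hz
  obtain ⟨r, hρr, hr⟩ := ENNReal.lt_iff_exists_nnreal_btwn.mp hρ
  have hr1 : (r : ℝ) < 1 := by exact_mod_cast hr
  refine Summable.of_norm_bounded_eventually_nat
    (summable_geometric_of_lt_one (by positivity) (pow_lt_one₀ r.2 hr1 two_ne_zero)) ?_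
  filter_upwards [spectrum.eventually_norm_pow_le_of_spectralRadius_lt hρr] with k hk
  have hmap : ‖Φc ^ k‖ = ‖Φ ^ k‖ := by
    rw [show Φc ^ k = (Φ ^ k).map (fun r : ℝ => (r : ℂ)) from
      (map_pow Complex.ofRealHom.mapMatrix Φ k).symm, frobenius_norm_map_eq _ _ Complex.norm_real]
  rw [norm_pow, norm_norm, ← pow_mul, mul_comm, pow_mul, ← hmap]
  exact pow_le_pow_left₀ (norm_nonneg _) hk 2

theorem exists_trace_sum_transpose_pow_mul_pow_le {Φ S : Matrix ι ι ℝ}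
    (h : ∀ μ ∈ spectrum ℂ (Φ.map (fun r : ℝ => (r : ℂ))), ‖μ‖ < 1) (hS : 0 ≤ S) :
    ∃ b, ∀ T, (∑ k ∈ Finset.range T, (Φᵀ) ^ k * S * Φ ^ k).trace ≤ b := by
  have hsum := summable_frobenius_norm_pow_sq h
  refine ⟨S.trace * ∑' k, ‖Φ ^ k‖ ^ 2, fun T => ?_⟩
  calc (∑ k ∈ Finset.range T, (Φᵀ) ^ k * S * Φ ^ k).trace
      ≤ ∑ k ∈ Finset.range T, S.trace * ‖Φ ^ k‖ ^ 2 := by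
        rw [trace_sum]
        refine Finset.sum_le_sum fun k _ => ?_
        rw [← transpose_pow, ← trace_transpose_mul_self_eq_frobenius_norm_sq]
        exact trace_transpose_mul_mul_le hS _
    _ ≤ S.trace * ∑' k, ‖Φ ^ k‖ ^ 2 := by
        rw [← Finset.mul_sum]
        exact mul_le_mul_of_nonneg_left (hsum.sum_le_tsum _ fun k _ => by positivity)
          hS.posSemidef.trace_nonneg

end Frobenius

end Matrix

section RiccatiStep

variable {ι κ : Type*} [Fintype ι] [Fintype κ]
  (A : Matrix ι ι ℝ) (B : Matrix ι κ ℝ) (Q : Matrix ι ι ℝ) (R : Matrix κ κ ℝ)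

def gainStep (K : Matrix κ ι ℝ) (P : Matrix ι ι ℝ) : Matrix ι ι ℝ :=
  (A - B * K)ᵀ * P * (A - B * K) + Kᵀ * R * K + Q

variable {A B Q R}

theorem gainStep_mono (K : Matrix κ ι ℝ) : Monotone (gainStep A B Q R K) := fun _ _ h => by
  unfold gainStep
  gcongr
  exact transpose_mul_mul_le_transpose_mul_mul h _

theorem gainStep_iterate_zero [DecidableEq ι] (K : Matrix κ ι ℝ) (T : ℕ) :
    (gainStep A B Q R K)^[T] 0 =
      ∑ k ∈ Finset.range T, ((A - B * K)ᵀ) ^ k * (Q + Kᵀ * R * K) * (A - B * K) ^ k := by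
  set Φ := A - B * K
  set S := Q + Kᵀ * R * K
  have hterm : ∀ k, (Φᵀ) ^ (k + 1) * S * Φ ^ (k + 1) = Φᵀ * ((Φᵀ) ^ k * S * Φ ^ k) * Φ :=
    fun k => by rw [pow_succ', pow_succ]; simp only [Matrix.mul_assoc]
  induction T with
  | zero => simp
  | succ T ih =>
    rw [Function.iterate_succ_apply', ih, Finset.sum_range_succ', gainStep]
    simp only [hterm, ← Finset.mul_sum, ← Finset.sum_mul, pow_zero, Matrix.one_mul,
      Matrix.mul_one, S]
    abel

variable (A B Q R) [DecidableEq κ]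

noncomputable def riccatiStep (P : Matrix ι ι ℝ) : Matrix ι ι ℝ :=
  Aᵀ * P * A - Aᵀ * P * B * (Bᵀ * P * B + R)⁻¹ * Bᵀ * P * A + Q

noncomputable def optimalGain (P : Matrix ι ι ℝ) : Matrix κ ι ℝ :=
  (Bᵀ * P * B + R)⁻¹ * (Bᵀ * P * A)

variable {A B Q R}

theorem gainStep_eq_riccatiStep_add (hR : R.PosDef) {P : Matrix ι ι ℝ} (hP : 0 ≤ P)
    (K : Matrix κ ι ℝ) :
    gainStep A B Q R K P = riccatiStep A B Q R P +
      (K - optimalGain A B R P)ᵀ * (Bᵀ * P * B + R) * (K - optimalGain A B R P) := by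
  set M := Bᵀ * P * B + R with hM_def
  set G := optimalGain A B R P
  have hM : M.PosDef := hR.posSemidef_add (hP.posSemidef.conjTranspose_mul_mul_same B)
  have hMG : M * G = Bᵀ * P * A := mul_nonsing_inv_cancel_left _ _ (hM.isUnit.map detMonoidHom)
  have hPt : Pᵀ = P := hP.posSemidef.isHermitian
  have hMt : Mᵀ = M := hM.isHermitian
  have hGM : Gᵀ * M = Aᵀ * P * B := by
    rw [← hMt, ← transpose_mul, hMG]
    simp [Matrix.mul_assoc, hPt]
  have hGt : Gᵀ = Aᵀ * P * B * M⁻¹ := by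
    change (M⁻¹ * (Bᵀ * P * A))ᵀ = _
    simp [transpose_nonsing_inv, hMt, hPt, Matrix.mul_assoc]
  have hsq : (K - G)ᵀ * M * (K - G) =
      Kᵀ * M * K - Kᵀ * (M * G) - Gᵀ * M * K + Gᵀ * (M * G) := by
    simp only [transpose_sub, Matrix.sub_mul, Matrix.mul_sub, Matrix.mul_assoc]
    abel
  rw [hsq, hMG, hGM, hGt, hM_def, gainStep, riccatiStep]
  simp only [transpose_sub, transpose_mul, Matrix.mul_add, Matrix.add_mul, Matrix.sub_mul,
    Matrix.mul_sub, Matrix.mul_assoc]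
  abel

theorem riccatiStep_le_gainStep (hR : R.PosDef) {P : Matrix ι ι ℝ} (hP : 0 ≤ P)
    (K : Matrix κ ι ℝ) : riccatiStep A B Q R P ≤ gainStep A B Q R K P := by
  rw [gainStep_eq_riccatiStep_add hR hP K]
  have hM : 0 ≤ Bᵀ * P * B + R :=
    (hR.posSemidef_add (hP.posSemidef.conjTranspose_mul_mul_same B)).posSemidef.nonneg
  simpa using transpose_mul_mul_le_transpose_mul_mul hM (K - optimalGain A B R P)

theorem gainStep_optimalGain (hR : R.PosDef) {P : Matrix ι ι ℝ} (hP : 0 ≤ P) :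
    gainStep A B Q R (optimalGain A B R P) P = riccatiStep A B Q R P := by
  simp [gainStep_eq_riccatiStep_add hR hP]

theorem riccatiStep_mono (hR : R.PosDef) {P P' : Matrix ι ι ℝ} (hP : 0 ≤ P) (h : P ≤ P') :
    riccatiStep A B Q R P ≤ riccatiStep A B Q R P' := calc
  riccatiStep A B Q R P ≤ gainStep A B Q R (optimalGain A B R P') P :=
    riccatiStep_le_gainStep hR hP _
  _ ≤ gainStep A B Q R (optimalGain A B R P') P' := gainStep_mono _ h
  _ = riccatiStep A B Q R P' := gainStep_optimalGain hR (hP.trans h)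

end RiccatiStep

section RiccatiSequence

variable {n m : ℕ} (A : Matrix (Fin n) (Fin n) ℝ) (B : Matrix (Fin n) (Fin m) ℝ)
  {Q : Matrix (Fin n) (Fin n) ℝ} {R : Matrix (Fin m) (Fin m) ℝ}

theorem riccati_succ (k : ℕ) :
    riccati A B Q R (k + 1) = riccatiStep A B Q R (riccati A B Q R k) := rfl

theorem riccati_one : riccati A B Q R 1 = Q := by
  simp [riccati]

theorem monotone_riccati (hQ : 0 ≤ Q) (hR : R.PosDef) : Monotone (riccati A B Q R) := by
  have key : ∀ k, 0 ≤ riccati A B Q R k ∧ riccati A B Q R k ≤ riccati A B Q R (k + 1) := by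
    intro k
    induction k with
    | zero => exact ⟨le_rfl, by rwa [zero_add, riccati_one]⟩
    | succ k ih => exact ⟨ih.1.trans ih.2, riccatiStep_mono hR ih.1 ih.2⟩
  exact monotone_nat_of_le_succ fun k => (key k).2

theorem riccati_nonneg (hQ : 0 ≤ Q) (hR : R.PosDef) (T : ℕ) : 0 ≤ riccati A B Q R T :=
  monotone_riccati A B hQ hR (Nat.zero_le T)

theorem riccati_le_gainStep_iterate (hQ : 0 ≤ Q) (hR : R.PosDef) (K : Matrix (Fin m) (Fin n) ℝ)
    (T : ℕ) : riccati A B Q R T ≤ (gainStep A B Q R K)^[T] 0 := by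
  induction T with
  | zero => exact le_rfl
  | succ T ih =>
    rw [riccati_succ, Function.iterate_succ_apply']
    exact (riccatiStep_le_gainStep hR (riccati_nonneg A B hQ hR T) K).trans (gainStep_mono K ih)

theorem bddAbove_trace_riccati (hQ : 0 ≤ Q) (hR : R.PosDef) (K : Matrix (Fin m) (Fin n) ℝ)
    (hK : ∀ μ ∈ spectrum ℂ ((A - B * K).map (fun r : ℝ => (r : ℂ))), ‖μ‖ < 1) :
    BddAbove (Set.range fun T => (riccati A B Q R T).trace) := by
  have hS : 0 ≤ Q + Kᵀ * R * K :=
    add_nonneg hQ (by simpa using transpose_mul_mul_le_transpose_mul_mul hR.posSemidef.nonneg K)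
  obtain ⟨b, hb⟩ := exists_trace_sum_transpose_pow_mul_pow_le hK hS
  refine ⟨b, Set.forall_mem_range.2 fun T => ?_⟩
  have hbT := hb T
  rw [← gainStep_iterate_zero] at hbT
  exact (trace_mono (riccati_le_gainStep_iterate A B hQ hR K T)).trans hbT

end RiccatiSequence

/-- Under stabilizability of `(A,B)`, there exist constants `α_T > 1` with `α_T → 1` such
that `P_{T+1} ⪯ α_{T+1} P_T` for all `T ≥ 1` (Appendix Lemma 1). -/
theorem riccati_horizon_comparison_constants {n m : ℕ}
    (A : Matrix (Fin n) (Fin n) ℝ) (B : Matrix (Fin n) (Fin m) ℝ)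
    (Q : Matrix (Fin n) (Fin n) ℝ) (R : Matrix (Fin m) (Fin m) ℝ)
    (hQ : Q.PosDef) (hR : R.PosDef)
    (hstab : ∃ K : Matrix (Fin m) (Fin n) ℝ,
      ∀ μ ∈ spectrum ℂ ((A - B * K).map (fun r : ℝ => (r : ℂ))), ‖μ‖ < 1) :
    ∃ α : ℕ → ℝ,
      (∀ T : ℕ, 2 ≤ T → 1 < α T) ∧
      Filter.Tendsto α Filter.atTop (nhds 1) ∧
      (∀ T : ℕ, 1 ≤ T →
        loewnerLE (riccati A B Q R (T + 1)) (α (T + 1) • riccati A B Q R T)) := by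
  obtain ⟨K, hK⟩ := hstab
  obtain ⟨c, hc, hcQ⟩ := hQ.exists_pos_smul_one_le
  have hmono := monotone_riccati A B hQ.posSemidef.nonneg hR
  have hcP : ∀ T, 1 ≤ T → c • (1 : Matrix (Fin n) (Fin n) ℝ) ≤ riccati A B Q R T := fun T hT =>
    hcQ.trans (by simpa [riccati_one] using hmono hT)
  exact exists_le_smul_of_monotone_of_bddAbove_trace hmono
    (bddAbove_trace_riccati A B hQ.posSemidef.nonneg hR K hK) hc hcP
end

section
/- Consider the time-varying MPC setup: fix real matrices A (n×n), B (n×m), a horizon T ≥ 1, a real δ ∈ [0,1), and sequences (Q_t)_{t∈ℕ} of symmetric positive definite n×n matrices and (R_t)_{t∈ℕ} of symmetric positive definite m×m matrices satisfying (1−δ)Q_t ⪯ Q_{t+1} ⪯ (1+δ)Q_t and (1−δ)R_t ⪯ R_{t+1} ⪯ (1+δ)R_t for all t. For weights (Q,R) let P_k(Q,R) be the Riccati iterates with P_0 = 0 and P_{k+1} = AᵀP_kA − AᵀP_kB(BᵀP_kB+R)⁻¹BᵀP_kA + Q, and let the MPC closed-loop trajectory from x_0 be x_{t+1} = Ax_t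 + Bû_t with û_t = −(BᵀP_{T−1}(Q_t,R_t)B+R_t)⁻¹BᵀP_{T−1}(Q_t,R_t)A x_t. Suppose α > 1 satisfies P_T(Q_t,R_t) ⪯ α·P_{T−1}(Q_t,R_t) for all t. Then for every t ∈ ℕ, the realized stage cost satisfies x_tᵀQ_tx_t + û_tᵀR_tû_t ≤ x_tᵀP_T(Q_t,R_t)x_t − ((1−δ)/α)·x_{t+1}ᵀP_T(Q_{t+1},R_{t+1})x_{t+1}. -/
/-!
Completing the square in the control, the one-step cost `xᵀQx + uᵀRu + (Ax+Bu)ᵀP(Ax+Bu)` of a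
linear feedback `u = -Kx` exceeds its value at the Riccati gain `K* = (BᵀPB+R)⁻¹BᵀPA` by
`(K-K*)ᵀ(BᵀPB+R)(K-K*)`, and at that gain it equals the Riccati update of `P`. Hence
`x_tᵀP_T x_t = x_tᵀQ_tx_t + û_tᵀR_tû_t + x_{t+1}ᵀP_{T-1}x_{t+1}` along the MPC trajectory, and
the Riccati iterates are monotone and positively homogeneous in the weights `(Q, R)`. The weight
bound `(Q_{t+1}, R_{t+1}) ⪯ (1+δ)(Q_t, R_t)` thus gives `(1-δ)P_{T-1}(t+1) ⪯ (1-δ²)P_{T-1}(t) ⪯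
P_{T-1}(t)`, and `P_T ⪯ αP_{T-1}` at time `t+1` finishes the estimate.
-/

open Matrix

theorem Matrix.inv_smul_of_ne_zero {ι 𝕜 : Type*} [Fintype ι] [DecidableEq ι] [Field 𝕜]
    {c : 𝕜} (hc : c ≠ 0) (M : Matrix ι ι 𝕜) : (c • M)⁻¹ = c⁻¹ • M⁻¹ := by
  by_cases hM : IsUnit M.det
  · let _ := invertibleOfNonzero hc
    rw [inv_smul M c hM, invOf_eq_inv]
  · have hcM : ¬IsUnit (c • M).det := by
      simpa [det_smul, isUnit_iff_ne_zero, hc] using hM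
    rw [nonsing_inv_apply_not_isUnit _ hM, nonsing_inv_apply_not_isUnit _ hcM, smul_zero]

theorem Matrix.PosSemidef.transpose_mul_mul_same {ι κ : Type*} [Fintype ι] [Fintype κ]
    {P : Matrix ι ι ℝ} (hP : P.PosSemidef) (M : Matrix ι κ ℝ) : (Mᵀ * P * M).PosSemidef := by
  simpa using hP.conjTranspose_mul_mul_same M

theorem Matrix.PosSemidef.transpose_mul_mul_add_posDef {ι κ : Type*} [Fintype ι] [Fintype κ]
    {P : Matrix ι ι ℝ} {R : Matrix κ κ ℝ} (hP : P.PosSemidef) (hR : R.PosDef)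
    (B : Matrix ι κ ℝ) : (Bᵀ * P * B + R).PosDef :=
  PosDef.posSemidef_add (hP.transpose_mul_mul_same B) hR

section FeedbackCost

variable {ι κ 𝕜 : Type*} [Fintype ι] [Fintype κ] [CommRing 𝕜]
  (A : Matrix ι ι 𝕜) (B : Matrix ι κ 𝕜) (Q : Matrix ι ι 𝕜) (R : Matrix κ κ 𝕜) (P : Matrix ι ι 𝕜)

/-- The quadratic form of `x ↦ xᵀQx + uᵀRu + (Ax+Bu)ᵀP(Ax+Bu)` under the feedback `u = -Kx`. -/
def feedbackCost (K : Matrix κ ι 𝕜) : Matrix ι ι 𝕜 :=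
  Q + Kᵀ * R * K + (A - B * K)ᵀ * P * (A - B * K)

noncomputable def riccatiGain [DecidableEq κ] : Matrix κ ι 𝕜 := (Bᵀ * P * B + R)⁻¹ * Bᵀ * P * A

variable {A B Q R P}

theorem dotProduct_feedbackCost_mulVec {K : Matrix κ ι 𝕜} {x : ι → 𝕜} {u : κ → 𝕜}
    (hu : u = -(K *ᵥ x)) :
    x ⬝ᵥ (feedbackCost A B Q R P K *ᵥ x) =
      x ⬝ᵥ (Q *ᵥ x) + u ⬝ᵥ (R *ᵥ u) + (A *ᵥ x + B *ᵥ u) ⬝ᵥ (P *ᵥ (A *ᵥ x + B *ᵥ u)) := by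
  have hnext : A *ᵥ x + B *ᵥ u = (A - B * K) *ᵥ x := by
    rw [hu, sub_mulVec, mulVec_neg, mulVec_mulVec, sub_eq_add_neg]
  rw [hnext, hu]
  simp only [feedbackCost, add_mulVec, dotProduct_add, ← mulVec_mulVec, mulVec_neg,
    dotProduct_neg, neg_dotProduct, neg_neg]
  rw [dotProduct_mulVec x Kᵀ, vecMul_transpose, dotProduct_mulVec x (A - B * K)ᵀ, vecMul_transpose]

variable [DecidableEq κ]

theorem transpose_mul_mul_sub_riccatiGain (hS : IsUnit (Bᵀ * P * B + R).det) :
    Bᵀ * P * (A - B * riccatiGain A B R P) = R * riccatiGain A B R P := by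
  have hSK : (Bᵀ * P * B + R) * riccatiGain A B R P = Bᵀ * P * A := by
    simp only [riccatiGain, ← Matrix.mul_assoc, mul_nonsing_inv _ hS, Matrix.one_mul]
  rw [Matrix.mul_sub, ← hSK, Matrix.add_mul, Matrix.mul_assoc _ B]
  abel

theorem feedbackCost_riccatiGain (hS : IsUnit (Bᵀ * P * B + R).det) :
    feedbackCost A B Q R P (riccatiGain A B R P) =
      Aᵀ * P * A - Aᵀ * P * B * (Bᵀ * P * B + R)⁻¹ * Bᵀ * P * A + Q := by
  have hK := transpose_mul_mul_sub_riccatiGain (A := A) hS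
  set K := riccatiGain A B R P with hKdef
  calc feedbackCost A B Q R P K
      = Q + Kᵀ * R * K + Aᵀ * P * (A - B * K) - Kᵀ * (Bᵀ * P * (A - B * K)) := by
        simp only [feedbackCost, transpose_sub, transpose_mul, Matrix.sub_mul, Matrix.mul_assoc]
        abel
    _ = Aᵀ * P * A - Aᵀ * P * B * K + Q := by
        rw [hK, Matrix.mul_sub]
        simp only [Matrix.mul_assoc]
        abel
    _ = _ := by simp only [hKdef, riccatiGain, Matrix.mul_assoc]

theorem feedbackCost_eq_feedbackCost_riccatiGain_add (hP : P.IsSymm) (hR : R.IsSymm)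
    (hS : IsUnit (Bᵀ * P * B + R).det) (K : Matrix κ ι 𝕜) :
    feedbackCost A B Q R P K = feedbackCost A B Q R P (riccatiGain A B R P) +
      (K - riccatiGain A B R P)ᵀ * (Bᵀ * P * B + R) * (K - riccatiGain A B R P) := by
  have hK := transpose_mul_mul_sub_riccatiGain (A := A) hS
  have hK_tr := congrArg transpose hK
  simp only [transpose_mul, transpose_transpose, hP.eq, hR.eq, ← Matrix.mul_assoc] at hK_tr
  set K' := riccatiGain A B R P
  calc feedbackCost A B Q R P K
      = feedbackCost A B Q R P K' + (K - K')ᵀ * (Bᵀ * P * B + R) * (K - K')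
          - (K - K')ᵀ * (Bᵀ * P * (A - B * K') - R * K')
          - ((A - B * K')ᵀ * P * B - K'ᵀ * R) * (K - K') := by
        simp only [feedbackCost, transpose_sub, transpose_mul, Matrix.sub_mul,
          Matrix.mul_sub, Matrix.add_mul, Matrix.mul_add, Matrix.mul_assoc]
        abel
    _ = _ := by rw [hK, hK_tr]; simp

end FeedbackCost

section Loewner

variable {n : ℕ} {X Y Z : Matrix (Fin n) (Fin n) ℝ}

theorem loewnerLE.refl : loewnerLE X X := by
  simpa [loewnerLE] using PosSemidef.zero

theorem loewnerLE.trans (hXY : loewnerLE X Y) (hYZ : loewnerLE Y Z) : loewnerLE X Z := by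
  simpa [loewnerLE] using hYZ.add hXY

theorem loewnerLE.dotProduct_mulVec_le (h : loewnerLE X Y) (v : Fin n → ℝ) :
    v ⬝ᵥ (X *ᵥ v) ≤ v ⬝ᵥ (Y *ᵥ v) := by
  have := h.dotProduct_mulVec_nonneg v
  simp only [star_trivial, sub_mulVec, dotProduct_sub] at this
  linarith

end Loewner

section Riccati

variable {n m : ℕ} (A : Matrix (Fin n) (Fin n) ℝ) (B : Matrix (Fin n) (Fin m) ℝ)
  {Q Q' : Matrix (Fin n) (Fin n) ℝ} {R R' : Matrix (Fin m) (Fin m) ℝ}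

theorem feedbackCost_mono {P P' : Matrix (Fin n) (Fin n) ℝ} (hQ : loewnerLE Q Q')
    (hR : loewnerLE R R') (hP : loewnerLE P P') (K : Matrix (Fin m) (Fin n) ℝ) :
    loewnerLE (feedbackCost A B Q R P K) (feedbackCost A B Q' R' P' K) := by
  have hdiff : feedbackCost A B Q' R' P' K - feedbackCost A B Q R P K =
      (Q' - Q) + Kᵀ * (R' - R) * K + (A - B * K)ᵀ * (P' - P) * (A - B * K) := by
    simp only [feedbackCost, Matrix.sub_mul, Matrix.mul_sub]
    abel
  unfold loewnerLE
  rw [hdiff]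
  exact (hQ.add (hR.transpose_mul_mul_same K)).add (hP.transpose_mul_mul_same _)

theorem feedbackCost_riccatiGain_le {P : Matrix (Fin n) (Fin n) ℝ} (hP : P.PosSemidef)
    (hR : R.PosDef) (K : Matrix (Fin m) (Fin n) ℝ) :
    loewnerLE (feedbackCost A B Q R P (riccatiGain A B R P)) (feedbackCost A B Q R P K) := by
  have hS := hP.transpose_mul_mul_add_posDef hR B
  unfold loewnerLE
  rw [feedbackCost_eq_feedbackCost_riccatiGain_add (isHermitian_iff_isSymm.mp hP.isHermitian)
    (isHermitian_iff_isSymm.mp hR.isHermitian)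
    ((isUnit_iff_isUnit_det _).mp hS.isUnit), add_sub_cancel_left]
  exact hS.posSemidef.transpose_mul_mul_same _

theorem riccati_succ_eq_feedbackCost {k : ℕ} (hP : (riccati A B Q R k).PosSemidef)
    (hR : R.PosDef) :
    riccati A B Q R (k + 1) =
      feedbackCost A B Q R (riccati A B Q R k) (riccatiGain A B R (riccati A B Q R k)) :=
  (feedbackCost_riccatiGain
    ((isUnit_iff_isUnit_det _).mp (hP.transpose_mul_mul_add_posDef hR B).isUnit)).symm

theorem riccati_posSemidef (hQ : Q.PosSemidef) (hR : R.PosDef) :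
    ∀ k, (riccati A B Q R k).PosSemidef
  | 0 => .zero
  | k + 1 => by
    have hP := riccati_posSemidef hQ hR k
    rw [riccati_succ_eq_feedbackCost A B hP hR]
    exact (hQ.add (hR.posSemidef.transpose_mul_mul_same _)).add (hP.transpose_mul_mul_same _)

theorem riccati_mono (hQ : Q.PosSemidef) (hR : R.PosDef) (hQQ' : loewnerLE Q Q')
    (hRR' : loewnerLE R R') : ∀ k, loewnerLE (riccati A B Q R k) (riccati A B Q' R' k)
  | 0 => loewnerLE.refl
  | k + 1 => by
    have hQ' : Q'.PosSemidef := by simpa [loewnerLE] using hQ.add hQQ'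
    have hR' : R'.PosDef := by simpa [loewnerLE] using hR.add_posSemidef hRR'
    have hP := riccati_posSemidef A B hQ hR k
    have hP' := riccati_posSemidef A B hQ' hR' k
    rw [riccati_succ_eq_feedbackCost A B hP hR, riccati_succ_eq_feedbackCost A B hP' hR']
    exact (feedbackCost_riccatiGain_le A B hP hR _).trans
      (feedbackCost_mono A B hQQ' hRR' (riccati_mono hQ hR hQQ' hRR' k) _)

theorem riccati_smul {c : ℝ} (hc : c ≠ 0) :
    ∀ k, riccati A B (c • Q) (c • R) k = c • riccati A B Q R k
  | 0 => (smul_zero c).symm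
  | k + 1 => by
    simp only [riccati, riccati_smul hc k, Matrix.mul_smul, Matrix.smul_mul, ← smul_add,
      Matrix.inv_smul_of_ne_zero hc, smul_smul, inv_mul_cancel₀ hc, one_smul]
    rw [smul_add, smul_sub]

theorem riccati_le_smul (hQ' : Q'.PosSemidef) (hR' : R'.PosDef) {c : ℝ} (hc : c ≠ 0)
    (hQ'Q : loewnerLE Q' (c • Q)) (hR'R : loewnerLE R' (c • R)) (k : ℕ) :
    loewnerLE (riccati A B Q' R' k) (c • riccati A B Q R k) :=
  riccati_smul A B hc k ▸ riccati_mono A B hQ' hR' hQ'Q hR'R k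

theorem dotProduct_riccati_succ_mulVec (hQ : Q.PosSemidef) (hR : R.PosDef) {k : ℕ}
    {x : Fin n → ℝ} {u : Fin m → ℝ}
    (hu : u = -(riccatiGain A B R (riccati A B Q R k) *ᵥ x)) :
    x ⬝ᵥ (riccati A B Q R (k + 1) *ᵥ x) = x ⬝ᵥ (Q *ᵥ x) + u ⬝ᵥ (R *ᵥ u) +
      (A *ᵥ x + B *ᵥ u) ⬝ᵥ (riccati A B Q R k *ᵥ (A *ᵥ x + B *ᵥ u)) := by
  rw [riccati_succ_eq_feedbackCost A B (riccati_posSemidef A B hQ hR k) hR,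
    dotProduct_feedbackCost_mulVec hu]

end Riccati

theorem mpc_stage_cost_bound_general {n m : ℕ}
    (A : Matrix (Fin n) (Fin n) ℝ) (B : Matrix (Fin n) (Fin m) ℝ)
    (T : ℕ) (hT : 1 ≤ T) (δ : ℝ) (hδ0 : 0 ≤ δ) (hδ1 : δ < 1)
    (Q : ℕ → Matrix (Fin n) (Fin n) ℝ) (R : ℕ → Matrix (Fin m) (Fin m) ℝ)
    (hQpd : ∀ t, (Q t).PosDef) (hRpd : ∀ t, (R t).PosDef)
    (hQhigh : ∀ t, loewnerLE (Q (t + 1)) ((1 + δ) • Q t))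
    (hRhigh : ∀ t, loewnerLE (R (t + 1)) ((1 + δ) • R t))
    (x : ℕ → Fin n → ℝ) (u : ℕ → Fin m → ℝ)
    (hu : ∀ t, u t = -(((Bᵀ * riccati A B (Q t) (R t) (T - 1) * B + R t)⁻¹ *
        Bᵀ * riccati A B (Q t) (R t) (T - 1) * A) *ᵥ x t))
    (hx : ∀ t, x (t + 1) = A *ᵥ x t + B *ᵥ u t)
    (α : ℝ) (hα : 1 < α)
    (hαP : ∀ t, loewnerLE (riccati A B (Q t) (R t) T)
      (α • riccati A B (Q t) (R t) (T - 1))) :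
    ∀ t : ℕ,
      x t ⬝ᵥ (Q t *ᵥ x t) + u t ⬝ᵥ (R t *ᵥ u t) ≤
        x t ⬝ᵥ (riccati A B (Q t) (R t) T *ᵥ x t) -
          ((1 - δ) / α) *
            (x (t + 1) ⬝ᵥ (riccati A B (Q (t + 1)) (R (t + 1)) T *ᵥ x (t + 1))) := by
  obtain ⟨k, rfl⟩ := Nat.exists_eq_add_of_le' hT
  intro t
  simp only [Nat.add_sub_cancel] at hu hαP
  set y := x (t + 1)
  have hvalue := dotProduct_riccati_succ_mulVec A B (hQpd t).posSemidef (hRpd t) (hu t)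
  rw [← hx t] at hvalue
  have hweights : y ⬝ᵥ (riccati A B (Q (t + 1)) (R (t + 1)) k *ᵥ y) ≤
      (1 + δ) * y ⬝ᵥ (riccati A B (Q t) (R t) k *ᵥ y) := by
    have h := riccati_le_smul A B (hQpd (t + 1)).posSemidef (hRpd (t + 1)) (by linarith)
      (hQhigh t) (hRhigh t) k
    simpa [smul_mulVec, dotProduct_smul] using h.dotProduct_mulVec_le y
  have hhorizon : y ⬝ᵥ (riccati A B (Q (t + 1)) (R (t + 1)) (k + 1) *ᵥ y) ≤
      α * y ⬝ᵥ (riccati A B (Q (t + 1)) (R (t + 1)) k *ᵥ y) := by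
    simpa [smul_mulVec, dotProduct_smul] using (hαP (t + 1)).dotProduct_mulVec_le y
  have hnonneg : 0 ≤ y ⬝ᵥ (riccati A B (Q t) (R t) k *ᵥ y) := by
    simpa using
      (riccati_posSemidef A B (hQpd t).posSemidef (hRpd t) k).dotProduct_mulVec_nonneg y
  have h1δ : 0 ≤ 1 - δ := by linarith
  have hα0 : 0 < α := by linarith
  rw [hvalue, div_mul_eq_mul_div, add_sub_assoc, le_add_iff_nonneg_right, sub_nonneg,
    div_le_iff₀ hα0]
  nlinarith [mul_le_mul_of_nonneg_left hhorizon h1δ,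
    mul_le_mul_of_nonneg_left hweights (mul_nonneg h1δ hα0.le),
    mul_nonneg (sq_nonneg δ) (mul_nonneg hα0.le hnonneg)]

/-- Key per-step estimate in Appendix Lemma 2(c): the realized MPC stage cost is bounded
by the decrease of the finite-horizon value function, up to the factor `(1−δ)/α`. -/
theorem mpc_stage_cost_bound {n m : ℕ}
    (A : Matrix (Fin n) (Fin n) ℝ) (B : Matrix (Fin n) (Fin m) ℝ)
    (T : ℕ) (hT : 1 ≤ T) (δ : ℝ) (hδ0 : 0 ≤ δ) (hδ1 : δ < 1)
    (Q : ℕ → Matrix (Fin n) (Fin n) ℝ) (R : ℕ → Matrix (Fin m) (Fin m) ℝ)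
    (hQpd : ∀ t, (Q t).PosDef) (hRpd : ∀ t, (R t).PosDef)
    (hQlow : ∀ t, loewnerLE ((1 - δ) • Q t) (Q (t + 1)))
    (hQhigh : ∀ t, loewnerLE (Q (t + 1)) ((1 + δ) • Q t))
    (hRlow : ∀ t, loewnerLE ((1 - δ) • R t) (R (t + 1)))
    (hRhigh : ∀ t, loewnerLE (R (t + 1)) ((1 + δ) • R t))
    (x : ℕ → Fin n → ℝ) (u : ℕ → Fin m → ℝ)
    (hu : ∀ t, u t = -(((Bᵀ * riccati A B (Q t) (R t) (T - 1) * B + R t)⁻¹ *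
        Bᵀ * riccati A B (Q t) (R t) (T - 1) * A) *ᵥ x t))
    (hx : ∀ t, x (t + 1) = A *ᵥ x t + B *ᵥ u t)
    (α : ℝ) (hα : 1 < α)
    (hαP : ∀ t, loewnerLE (riccati A B (Q t) (R t) T)
      (α • riccati A B (Q t) (R t) (T - 1))) :
    ∀ t : ℕ,
      x t ⬝ᵥ (Q t *ᵥ x t) + u t ⬝ᵥ (R t *ᵥ u t) ≤
        x t ⬝ᵥ (riccati A B (Q t) (R t) T *ᵥ x t) -
          ((1 - δ) / α) *
            (x (t + 1) ⬝ᵥ (riccati A B (Q (t + 1)) (R (t + 1)) T *ᵥ x (t + 1))) :=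
  mpc_stage_cost_bound_general A B T hT δ hδ0 hδ1 Q R hQpd hRpd hQhigh hRhigh x u hu hx α hα hαP
end
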